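/- Let m, n ≥ 1, let S ⊆ 𝔽₂^m be a subspace and Δ ∈ 𝔽₂^m ∖ S; let S_Δ be the subspace spanned by S and Δ, Ŝ := (S_Δ)⊥, and Δ̂ any vector in S⊥ ∖ Ŝ. Let x = (x₁, …, x_n), z = (z₁, …, z_n) ∈ (𝔽₂^m)ⁿ and ψ ∈ ℂ[𝔽₂ⁿ]. Then for every μ ∈ 𝔽₂ⁿ: ∑_{c = (c₁,…,c_n) with cᵢ ∈ Ŝ + μᵢΔ̂ + zᵢ for all i} |⟨c| (H^{⊗m})^{⊗n} (X^{x₁}Z^{z₁} ⊗ ⋯ ⊗ X^{x_n}Z^{z_n}) E_{S,Δ}^{⊗n} ψ⟩|² = |(H^{⊗n}ψ)(μ)|², where H^{⊗n} is the n-qubit Hadamard on ℂ[𝔽₂ⁿ] given by ⟨u|H^{⊗n}|v⟩ = 2^{−n/2}(−1)^{u·v}. In words: measuring the authenticated state in the Hadamard basis yields, with the same probability as measuring ψ in the Hadamard basis with outcome μ, a tuple of vectors lying in the dual product coset ∏ᵢ (Ŝ + μᵢΔ̂ + zᵢ), which classically decodes to μ. -/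

import Mathlib

/-!
The Hadamard-basis case of the correctness of the publicly-verifiable authentication
scheme of "Quantum State Obfuscation from Classical Oracles": measuring the
authenticated state `X^x Z^z E_{S,Δ}^{⊗n} ψ` in the Hadamard basis yields, with the
same probability as measuring `ψ` in the Hadamard basis with outcome `μ`, a tuple of
vectors in the dual product coset `∏ᵢ (Ŝ + μᵢΔ̂ + zᵢ)`, which classically decodes
to `μ`.
-/

open scoped BigOperators

noncomputable section

attribute [local instance] Classical.propDecidable

abbrev Fvec (n : ℕ) : Type := Fin n → ZMod 2

abbrev QSpace (n : ℕ) : Type := EuclideanSpace ℂ (Fvec n)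

/-- The ±1 lift of a bit: `+1` if `b = 0` and `−1` if `b = 1`. -/
def sgn (b : ZMod 2) : ℂ := if b = 0 then 1 else -1

/-- The dot product over `𝔽₂`. -/
def dotp {n : ℕ} (x y : Fvec n) : ZMod 2 := ∑ i, x i * y i

/-- The orthogonal complement `T⊥ = {w : w·t = 0 for all t ∈ T}` with respect to the
`𝔽₂` dot product. -/
def dualSub {n : ℕ} (T : Submodule (ZMod 2) (Fvec n)) : Submodule (ZMod 2) (Fvec n) where
  carrier := {w | ∀ t ∈ T, dotp w t = 0}
  add_mem' := by
    intro a b ha hb t ht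
    have h : dotp (a + b) t = dotp a t + dotp b t := by
      simp [dotp, add_mul, Finset.sum_add_distrib]
    rw [h, ha t ht, hb t ht, add_zero]
  zero_mem' := by
    intro t ht
    simp [dotp]
  smul_mem' := by
    intro c a ha t ht
    have h : dotp (c • a) t = c * dotp a t := by
      simp [dotp, Finset.mul_sum, mul_assoc]
    rw [h, ha t ht, mul_zero]

/-- The normalized coset state `|T+a⟩ = |T|^{−1/2} ∑_{t ∈ T} |t+a⟩`
(note that `v = t + a` iff `v + a ∈ T`, as we are in characteristic two). -/
def cosetState {n : ℕ} (T : Submodule (ZMod 2) (Fvec n)) (a : Fvec n) : QSpace n :=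
  WithLp.toLp 2 (fun v => if v + a ∈ T then ((Real.sqrt (Nat.card ↥T) : ℂ))⁻¹ else 0)

/-- The subspace `S_Δ` spanned by `S` and `Δ`, i.e. `S ∪ (S + Δ)` when `Δ ∉ S`. -/
def extSpan {n : ℕ} (S : Submodule (ZMod 2) (Fvec n)) (Δ : Fvec n) :
    Submodule (ZMod 2) (Fvec n) :=
  S ⊔ Submodule.span (ZMod 2) {Δ}

/-- The `m`-qubit Hadamard `H^{⊗m}`, with matrix entries
`⟨u|H^{⊗m}|v⟩ = 2^{−m/2} (−1)^{u·v}`. -/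
def Had {n : ℕ} (ψ : QSpace n) : QSpace n :=
  WithLp.toLp 2 (fun u => (Real.sqrt (2 ^ n) : ℂ)⁻¹ * ∑ v, sgn (dotp u v) * ψ v)

/-- The `n`-register code space `ℂ[(𝔽₂^m)ⁿ]`. -/
abbrev QSpaceN (m n : ℕ) : Type := EuclideanSpace ℂ (Fin n → Fvec m)

/-- The authenticated (encoded-and-encrypted) state `X^x Z^z E_{S,Δ}^{⊗n} ψ`, where
`E_{S,Δ}|0⟩ = |S⟩`, `E_{S,Δ}|1⟩ = |S+Δ⟩` acts qubit-wise and `X^{x_i} Z^{z_i}` is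
applied to the `i`-th register. -/
def encState {m n : ℕ} (S : Submodule (ZMod 2) (Fvec m)) (Δ : Fvec m)
    (x z : Fin n → Fvec m) (ψ : QSpace n) : QSpaceN m n :=
  WithLp.toLp 2 (fun c => ∑ μ : Fvec n, ψ μ *
    ∏ i, (sgn (dotp (z i) (c i + x i)) * cosetState S (μ i • Δ) (c i + x i)))

/-- The dot product on `(𝔽₂^m)ⁿ`. -/
def bigDot {m n : ℕ} (u v : Fin n → Fvec m) : ZMod 2 := ∑ i, dotp (u i) (v i)

/-- The full Hadamard `(H^{⊗m})^{⊗n}` on `ℂ[(𝔽₂^m)ⁿ]`, with matrix entries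
`2^{−mn/2} (−1)^{u·v}`. -/
def HadBig {m n : ℕ} (Ψ : QSpaceN m n) : QSpaceN m n :=
  WithLp.toLp 2 (fun u => (Real.sqrt (2 ^ (m * n)) : ℂ)⁻¹ * ∑ v, sgn (bigDot u v) * Ψ v)


/-!
Every tuple `c` in the coset has `cᵢ + zᵢ ∈ S⊥`, and for such `c` every register contributes
the same amplitude: substituting `v = s + xᵢ + μ'ᵢΔ` with `s ∈ S`, the phase `(−1)^{(cᵢ+zᵢ)·s}` is
trivial, leaving `√|S| (−1)^{cᵢ·xᵢ} (−1)^{μ'ᵢ ((cᵢ+zᵢ)·Δ)}`. Summing over `μ'` reassembles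
`(H^{⊗n}ψ)(ν)` with `νᵢ = (cᵢ+zᵢ)·Δ`, and on the coset `νᵢ = μᵢ` because `Δ̂·Δ = 1`. Hence each
of the `|Ŝ|ⁿ` tuples in the coset has probability `|S|ⁿ 2ⁿ 2^{−mn} |(H^{⊗n}ψ)(μ)|²`, and
`|Ŝ|·|S|·2 = 2^m` since `dim S_Δ = dim S + 1` and `dim T + dim T⊥ = m`.
-/

open Module

lemma ZMod.eq_zero_or_eq_one (a : ZMod 2) : a = 0 ∨ a = 1 := by
  revert a; decide

lemma sgn_add (a b : ZMod 2) : sgn (a + b) = sgn a * sgn b := by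
  obtain rfl | rfl := ZMod.eq_zero_or_eq_one a <;>
    obtain rfl | rfl := ZMod.eq_zero_or_eq_one b <;>
    simp [sgn, show (1 + 1 : ZMod 2) = 0 from rfl]

lemma sgn_sum {ι : Type*} (s : Finset ι) (f : ι → ZMod 2) :
    sgn (∑ i ∈ s, f i) = ∏ i ∈ s, sgn (f i) := by
  classical
  induction s using Finset.induction_on with
  | empty => simp [sgn]
  | insert i s hi ih => rw [Finset.sum_insert hi, Finset.prod_insert hi, sgn_add, ih]

lemma norm_sgn (a : ZMod 2) : ‖sgn a‖ = 1 := by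
  unfold sgn; split_ifs <;> simp

lemma dotp_eq_dotProduct {k : ℕ} (x y : Fvec k) : dotp x y = x ⬝ᵥ y := rfl

lemma mem_dualSub {k : ℕ} {T : Submodule (ZMod 2) (Fvec k)} {w : Fvec k} :
    w ∈ dualSub T ↔ ∀ t ∈ T, dotp w t = 0 := Iff.rfl

lemma dualSub_eq_comap_dualAnnihilator {k : ℕ} (T : Submodule (ZMod 2) (Fvec k)) :
    dualSub T = T.dualAnnihilator.comap (dotProductEquiv (ZMod 2) (Fin k)).toLinearMap := by
  ext w
  simp [mem_dualSub, Submodule.mem_dualAnnihilator, dotp_eq_dotProduct]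

lemma finrank_add_finrank_dualSub {k : ℕ} (T : Submodule (ZMod 2) (Fvec k)) :
    finrank (ZMod 2) T + finrank (ZMod 2) (dualSub T) = k := by
  rw [dualSub_eq_comap_dualAnnihilator, Submodule.comap_equiv_eq_map_symm,
    LinearEquiv.finrank_map_eq, Subspace.finrank_add_finrank_dualAnnihilator_eq,
    finrank_fin_fun]

lemma card_dualSub_extSpan_mul_card_mul_two {m : ℕ} {S : Submodule (ZMod 2) (Fvec m)}
    {Δ : Fvec m} (hΔ : Δ ∉ S) :
    Nat.card (dualSub (extSpan S Δ)) * Nat.card S * 2 = 2 ^ m := by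
  have hdual := finrank_add_finrank_dualSub (extSpan S Δ)
  have hext : finrank (ZMod 2) (extSpan S Δ) = finrank (ZMod 2) S + 1 :=
    Submodule.finrank_sup_span_singleton hΔ
  rw [natCard_eq_pow_finrank (K := ZMod 2) (V := dualSub _),
    natCard_eq_pow_finrank (K := ZMod 2) (V := S), Nat.card_zmod, ← pow_add, ← pow_succ]
  congr 1
  omega

lemma mem_dualSub_extSpan {k : ℕ} {S : Submodule (ZMod 2) (Fvec k)} {Δ w : Fvec k} :
    w ∈ dualSub (extSpan S Δ) ↔ w ∈ dualSub S ∧ dotp w Δ = 0 := by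
  simp only [mem_dualSub, extSpan, Submodule.mem_sup, Submodule.mem_span_singleton]
  constructor
  · intro h
    exact ⟨fun t ht => h t ⟨t, ht, 0, ⟨0, zero_smul _ _⟩, add_zero t⟩,
      h Δ ⟨0, S.zero_mem, Δ, ⟨1, one_smul _ _⟩, zero_add Δ⟩⟩
  · rintro ⟨hS, hΔ⟩ _ ⟨s, hs, _, ⟨a, rfl⟩, rfl⟩
    simp only [dotp_eq_dotProduct] at *
    rw [dotProduct_add, dotProduct_smul, hS s hs, hΔ, smul_zero, add_zero]

lemma add_smul_mem_dualSub_extSpan_iff {k : ℕ} {S : Submodule (ZMod 2) (Fvec k)}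
    {Δ Δhat : Fvec k} (hΔhat : Δhat ∈ dualSub S) (hΔhatΔ : dotp Δhat Δ = 1) (w : Fvec k)
    (b : ZMod 2) :
    w + b • Δhat ∈ dualSub (extSpan S Δ) ↔ w ∈ dualSub S ∧ dotp w Δ = b := by
  rw [mem_dualSub_extSpan, Submodule.add_mem_iff_left _ (Submodule.smul_mem _ b hΔhat)]
  simp only [dotp_eq_dotProduct] at *
  rw [add_dotProduct, smul_dotProduct, hΔhatΔ, smul_eq_mul, mul_one, CharTwo.add_eq_zero]

lemma card_forall_add_mem {ι G σ : Type*} [Fintype ι] [AddGroup G] [SetLike σ G] (T : σ)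
    (a : ι → G) : Nat.card {c : ι → G // ∀ i, c i + a i ∈ T} = Nat.card T ^ Fintype.card ι := by
  rw [Nat.card_congr (Equiv.subtypePiEquivPi (p := fun i g => g + a i ∈ T)), Nat.card_pi,
    ← Finset.card_univ, ← Finset.prod_const]
  refine Fintype.prod_congr _ _ fun i => Nat.card_congr ?_
  exact (Equiv.addRight (a i)).subtypeEquiv fun c => Iff.rfl

lemma cosetState_apply_add_self {k : ℕ} (T : Submodule (ZMod 2) (Fvec k)) (a w : Fvec k) :
    cosetState T a (w + a) = if w ∈ T then ((Real.sqrt (Nat.card T) : ℂ))⁻¹ else 0 := by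
  rw [cosetState, PiLp.toLp_apply, add_assoc, ZModModule.add_self, add_zero]

lemma sum_sgn_mul_cosetState {m : ℕ} (S : Submodule (ZMod 2) (Fvec m)) (Δ u x z : Fvec m)
    (b : ZMod 2) (h : u + z ∈ dualSub S) :
    ∑ v, sgn (dotp u v) * (sgn (dotp z (v + x)) * cosetState S (b • Δ) (v + x))
      = Real.sqrt (Nat.card S) * (sgn (dotp u x) * sgn (b * dotp (u + z) Δ)) := by
  set C := sgn (dotp u x) * sgn (b * dotp (u + z) Δ)
  have hterm : ∀ w, sgn (dotp u (w + (x + b • Δ))) *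
      (sgn (dotp z (w + (x + b • Δ) + x)) * cosetState S (b • Δ) (w + (x + b • Δ) + x))
        = if w ∈ S then C * ((Real.sqrt (Nat.card S) : ℂ))⁻¹ else 0 := by
    intro w
    rw [add_comm x, ← add_assoc, add_assoc (w + b • Δ), ZModModule.add_self, add_zero,
      cosetState_apply_add_self]
    split_ifs with hw
    · have hw' : dotp u w + dotp z w = 0 := by
        rw [← h w hw]; simp only [dotp_eq_dotProduct, add_dotProduct]
      have hsgn : sgn (dotp u w) * sgn (dotp z w) = 1 := by rw [← sgn_add, hw']; simp [sgn]
      simp only [C, dotp_eq_dotProduct, dotProduct_add, dotProduct_smul, add_dotProduct,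
        smul_eq_mul, mul_add, sgn_add] at hsgn ⊢
      linear_combination (sgn (b * u ⬝ᵥ Δ) * sgn (u ⬝ᵥ x) * sgn (b * z ⬝ᵥ Δ) *
        ((Real.sqrt (Nat.card S) : ℂ))⁻¹) * hsgn
    · rw [mul_zero, mul_zero]
  -- `v = w + x + b • Δ`, so that `cosetState` restricts `w` to `S`
  rw [← Equiv.sum_comp (Equiv.addRight (x + b • Δ))]
  simp only [Equiv.coe_addRight, hterm]
  have hdiv : (Nat.card S : ℂ) * ((Real.sqrt (Nat.card S) : ℂ))⁻¹ = Real.sqrt (Nat.card S) := by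
    rw [← div_eq_mul_inv]; exact_mod_cast Real.div_sqrt
  rw [← Finset.sum_filter, Finset.sum_const, nsmul_eq_mul, ← Fintype.card_subtype,
    ← Nat.card_eq_fintype_card, mul_left_comm, hdiv, mul_comm]

section Amplitude

variable {m n : ℕ} (S : Submodule (ZMod 2) (Fvec m)) (Δ : Fvec m) (x z : Fin n → Fvec m)
  (ψ : QSpace n)

lemma HadBig_encState_apply (c : Fin n → Fvec m) :
    HadBig (encState S Δ x z ψ) c = (Real.sqrt (2 ^ (m * n)) : ℂ)⁻¹ * ∑ μ, ψ μ *
      ∏ i, ∑ v, sgn (dotp (c i) v) *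
        (sgn (dotp (z i) (v + x i)) * cosetState S (μ i • Δ) (v + x i)) := by
  simp only [HadBig, encState, PiLp.toLp_apply, Fintype.prod_sum]
  congr 1
  simp only [Finset.mul_sum]
  rw [Finset.sum_comm]
  refine Fintype.sum_congr _ _ fun v => Fintype.sum_congr _ _ fun μ => ?_
  simp only [bigDot, sgn_sum, Finset.prod_mul_distrib]
  ring

lemma HadBig_encState_apply_of_forall_mem {c : Fin n → Fvec m} (h : ∀ i, c i + z i ∈ dualSub S) :
    HadBig (encState S Δ x z ψ) c = (Real.sqrt (2 ^ (m * n)) : ℂ)⁻¹ *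
      ((Real.sqrt (Nat.card S) : ℂ) ^ n * (∏ i, sgn (dotp (c i) (x i))) *
        ((Real.sqrt (2 ^ n) : ℂ) * Had ψ (fun i => dotp (c i + z i) Δ))) := by
  have h2 : (Real.sqrt (2 ^ n) : ℂ) ≠ 0 := by exact_mod_cast (Real.sqrt_pos.2 (by positivity)).ne'
  simp only [HadBig_encState_apply, sum_sgn_mul_cosetState _ _ _ _ _ _ (h _), Had,
    PiLp.toLp_apply, mul_inv_cancel_left₀ h2, Finset.prod_mul_distrib, Finset.prod_const,
    Finset.card_univ, Fintype.card_fin, ← sgn_sum]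
  congr 1
  rw [Finset.mul_sum]
  refine Fintype.sum_congr _ _ fun μ => ?_
  simp only [dotp, mul_comm (μ _)]
  ring

lemma norm_HadBig_encState_sq {c : Fin n → Fvec m} (h : ∀ i, c i + z i ∈ dualSub S) :
    ‖HadBig (encState S Δ x z ψ) c‖ ^ 2
      = Nat.card S ^ n * 2 ^ n / 2 ^ (m * n) * ‖Had ψ (fun i => dotp (c i + z i) Δ)‖ ^ 2 := by
  rw [HadBig_encState_apply_of_forall_mem S Δ x z ψ h]
  simp only [norm_mul, norm_inv, norm_pow, norm_prod, norm_sgn, Finset.prod_const_one,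
    Complex.norm_real, Real.norm_eq_abs, abs_of_nonneg (Real.sqrt_nonneg _), mul_one]
  rw [div_eq_mul_inv]
  simp only [mul_pow, inv_pow]
  rw [pow_right_comm _ n 2, Real.sq_sqrt (by positivity), Real.sq_sqrt (by positivity),
    Real.sq_sqrt (by positivity)]
  ring

lemma norm_HadBig_encState_sq_of_forall_mem_coset {Δhat : Fvec m} (hΔhat : Δhat ∈ dualSub S)
    (hΔhatΔ : dotp Δhat Δ = 1) (μ : Fvec n) {c : Fin n → Fvec m}
    (hc : ∀ i, c i + μ i • Δhat + z i ∈ dualSub (extSpan S Δ)) :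
    ‖HadBig (encState S Δ x z ψ) c‖ ^ 2
      = Nat.card S ^ n * 2 ^ n / 2 ^ (m * n) * ‖Had ψ μ‖ ^ 2 := by
  simp only [add_right_comm _ (_ • Δhat), add_smul_mem_dualSub_extSpan_iff hΔhat hΔhatΔ] at hc
  rw [norm_HadBig_encState_sq S Δ x z ψ fun i => (hc i).1,
    show (fun i => dotp (c i + z i) Δ) = μ from funext fun i => (hc i).2]

end Amplitude

theorem hadamard_basis_measurement_of_authenticated_state_general
    {m n : ℕ}
    (S : Submodule (ZMod 2) (Fvec m)) (Δ : Fvec m) (hΔ : Δ ∉ S)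
    (Δhat : Fvec m) (hΔhat₁ : Δhat ∈ dualSub S) (hΔhat₂ : Δhat ∉ dualSub (extSpan S Δ))
    (x z : Fin n → Fvec m) (ψ : QSpace n) (μ : Fvec n) :
    ∑ c : Fin n → Fvec m,
      (if ∀ i, c i + (μ i • Δhat) + z i ∈ dualSub (extSpan S Δ)
        then ‖HadBig (encState S Δ x z ψ) c‖ ^ 2 else 0)
      = ‖Had ψ μ‖ ^ 2 := by
  set Shat := dualSub (extSpan S Δ)
  have hΔhatΔ : dotp Δhat Δ = 1 := (ZMod.eq_zero_or_eq_one _).resolve_left fun h =>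
    hΔhat₂ (mem_dualSub_extSpan.2 ⟨hΔhat₁, h⟩)
  have hcard : (Nat.card Shat * Nat.card S * 2 : ℝ) = 2 ^ m := by
    exact_mod_cast card_dualSub_extSpan_mul_card_mul_two hΔ
  calc _ = ∑ c : Fin n → Fvec m, if ∀ i, c i + (μ i • Δhat + z i) ∈ Shat
        then (Nat.card S ^ n * 2 ^ n / 2 ^ (m * n) * ‖Had ψ μ‖ ^ 2 : ℝ) else 0 := by
        refine Fintype.sum_congr _ _ fun c => ?_
        simp only [← add_assoc]
        split_ifs with hc
        exacts [norm_HadBig_encState_sq_of_forall_mem_coset S Δ x z ψ hΔhat₁ hΔhatΔ μ hc, rfl]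
    _ = Nat.card Shat ^ n * (Nat.card S ^ n * 2 ^ n / 2 ^ (m * n) * ‖Had ψ μ‖ ^ 2) := by
        rw [← Finset.sum_filter, Finset.sum_const, nsmul_eq_mul, ← Fintype.card_subtype,
          ← Nat.card_eq_fintype_card, card_forall_add_mem, Fintype.card_fin, Nat.cast_pow]
    _ = ‖Had ψ μ‖ ^ 2 := by
        rw [pow_mul, ← hcard]
        field_simp
        ring

/-- For every subspace `S ⊆ 𝔽₂^m`, `Δ ∉ S`, `Ŝ := (S_Δ)⊥`, `Δ̂ ∈ S⊥ ∖ Ŝ`, one-time-pad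
keys `x, z ∈ (𝔽₂^m)ⁿ`, state `ψ ∈ ℂ[𝔽₂ⁿ]`, and outcome `μ ∈ 𝔽₂ⁿ`:
`∑_{c : ∀ i, cᵢ ∈ Ŝ + μᵢΔ̂ + zᵢ} |⟨c| (H^{⊗m})^{⊗n} X^x Z^z E_{S,Δ}^{⊗n} ψ⟩|²
  = |(H^{⊗n}ψ)(μ)|²`
(note `cᵢ ∈ Ŝ + μᵢΔ̂ + zᵢ` iff `cᵢ + μᵢΔ̂ + zᵢ ∈ Ŝ`, as we are in characteristic
two). -/
theorem hadamard_basis_measurement_of_authenticated_state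
    {m n : ℕ} (hm : 1 ≤ m) (hn : 1 ≤ n)
    (S : Submodule (ZMod 2) (Fvec m)) (Δ : Fvec m) (hΔ : Δ ∉ S)
    (Δhat : Fvec m) (hΔhat₁ : Δhat ∈ dualSub S) (hΔhat₂ : Δhat ∉ dualSub (extSpan S Δ))
    (x z : Fin n → Fvec m) (ψ : QSpace n) (μ : Fvec n) :
    ∑ c : Fin n → Fvec m,
      (if ∀ i, c i + (μ i • Δhat) + z i ∈ dualSub (extSpan S Δ)
        then ‖HadBig (encState S Δ x z ψ) c‖ ^ 2 else 0)
      = ‖Had ψ μ‖ ^ 2 :=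
  hadamard_basis_measurement_of_authenticated_state_general S Δ hΔ Δhat hΔhat₁ hΔhat₂ x z ψ μ
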